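/- The cycle C_n (n ≥ 3) is a W₂ graph if and only if n = 3 or n = 5. -/

import Mathlib

open SimpleGraph

/-- The circulant graph `C_n(S)` on `ℤ/nℤ`: vertices `i, j` are adjacent iff
`min{|i−j|, n−|i−j|} ∈ S`, i.e. iff `i − j` or `j − i` is congruent mod `n`
to an element of `S ⊆ {1, …, ⌊n/2⌋}`. -/
def circ (n : ℕ) (S : Set ℕ) : SimpleGraph (ZMod n) :=
  SimpleGraph.circulantGraph ((fun s : ℕ => (s : ZMod n)) '' S)

/-- `s` is an independent set of `G`. -/
def IsIndep {V : Type*} (G : SimpleGraph V) (s : Finset V) : Prop :=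
  ∀ ⦃u⦄, u ∈ s → ∀ ⦃w⦄, w ∈ s → ¬ G.Adj u w

/-- The independence number `α(G)`. -/
noncomputable def indepNum {V : Type*} [Fintype V] (G : SimpleGraph V) : ℕ :=
  sSup {k | ∃ s : Finset V, IsIndep G s ∧ s.card = k}

/-- `G` is a W₂ graph: it has at least two vertices and every pair of disjoint
independent sets is contained in a pair of disjoint maximum independent sets. -/
def IsW2 {V : Type*} [Fintype V] (G : SimpleGraph V) : Prop :=
  2 ≤ Fintype.card V ∧
  ∀ A B : Finset V, IsIndep G A → IsIndep G B → Disjoint A B →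
    ∃ A' B' : Finset V, A ⊆ A' ∧ B ⊆ B' ∧ Disjoint A' B' ∧
      IsIndep G A' ∧ IsIndep G B' ∧ A'.card = _root_.indepNum G ∧ B'.card = _root_.indepNum G

/-- The disjoint union of `d` copies of the graph `G`. -/
def copies {V : Type*} (d : ℕ) (G : SimpleGraph V) : SimpleGraph (Fin d × V) where
  Adj p q := p.1 = q.1 ∧ G.Adj p.2 q.2
  symm := ⟨fun p q h => ⟨h.1.symm, h.2.symm⟩⟩

/-!
Two disjoint maximum independent sets of `C_n` leave exactly `n - 2α(C_n) ≤ n % 2` vertices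
uncovered, since the even vertices give `α(C_n) ≥ ⌊n/2⌋`. For `n ≥ 6`, extend `A = {0}` and
`B = {2, 5}`: vertex `1` has a neighbour in each extension, and so does `4` (if `3 ∈ A'`) or `3`
(otherwise), so at least two vertices stay uncovered. The cycles `C_3`, `C_4`, `C_5` are
checked exhaustively.
-/

instance {V : Type*} (G : SimpleGraph V) [DecidableRel G.Adj] (s : Finset V) :
    Decidable (IsIndep G s) := by unfold IsIndep; infer_instance

theorem IsIndep.singleton {V : Type*} (G : SimpleGraph V) (a : V) : IsIndep G {a} := by
  intro u hu w hw
  rw [Finset.mem_singleton] at hu hw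
  subst hu hw
  exact G.irrefl

theorem IsIndep.notMem_union_of_adj {V : Type*} [DecidableEq V] {G : SimpleGraph V}
    {A B : Finset V} (hA : IsIndep G A) (hB : IsIndep G B)
    {a b v : V} (ha : a ∈ A) (hb : b ∈ B) (hva : G.Adj v a) (hvb : G.Adj v b) :
    v ∉ A ∪ B := by
  rw [Finset.mem_union]
  rintro (hv | hv)
  exacts [hA hv ha hva, hB hv hb hvb]

section IndepNum

variable {V : Type*} [Fintype V] {G : SimpleGraph V}

theorem IsIndep.card_le_indepNum {s : Finset V} (h : IsIndep G s) :
    s.card ≤ _root_.indepNum G :=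
  le_csSup ⟨Fintype.card V, by rintro k ⟨t, -, rfl⟩; exact t.card_le_univ⟩ ⟨s, h, rfl⟩

theorem indepNum_le {m : ℕ} (h : ∀ s : Finset V, IsIndep G s → s.card ≤ m) :
    _root_.indepNum G ≤ m :=
  csSup_le ⟨0, ∅, by simp [IsIndep], rfl⟩ (by rintro k ⟨s, hs, rfl⟩; exact h s hs)

theorem IsW2.exists_extensions_card_compl [DecidableEq V] (hG : IsW2 G) {A B : Finset V}
    (hA : IsIndep G A) (hB : IsIndep G B) (hAB : Disjoint A B) :
    ∃ A' B', A ⊆ A' ∧ B ⊆ B' ∧ IsIndep G A' ∧ IsIndep G B' ∧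
      (A' ∪ B')ᶜ.card = Fintype.card V - 2 * _root_.indepNum G := by
  obtain ⟨A', B', hAA', hBB', hdisj, hA', hB', hcardA, hcardB⟩ := hG.2 A B hA hB hAB
  refine ⟨A', B', hAA', hBB', hA', hB', ?_⟩
  rw [Finset.card_compl, Finset.card_union_of_disjoint hdisj, hcardA, hcardB, two_mul]

end IndepNum

theorem cycleGraph_adj_iff_val {n : ℕ} (hn : 2 ≤ n) {u v : Fin n} :
    (cycleGraph n).Adj u v ↔
      u.val = v.val + 1 ∨ v.val = u.val + 1 ∨
        u.val + n = v.val + 1 ∨ v.val + n = u.val + 1 := by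
  have huv := Fin.intCast_val_sub_eq_sub_add_ite u v
  have hvu := Fin.intCast_val_sub_eq_sub_add_ite v u
  rw [cycleGraph_adj']
  split_ifs at huv hvu <;> simp only [Fin.le_def, not_le] at * <;> omega

theorem div_two_le_indepNum_cycleGraph (n : ℕ) : n / 2 ≤ _root_.indepNum (cycleGraph n) := by
  rcases lt_or_ge n 2 with hn | hn
  · omega
  let evens : Fin (n / 2) ↪ Fin n :=
    ⟨fun i => ⟨2 * i, by omega⟩, fun i j h => Fin.ext (by simpa using h)⟩
  have hindep : IsIndep (cycleGraph n) (Finset.univ.map evens) := by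
    intro u hu w hw hadj
    simp only [Finset.mem_map, Finset.mem_univ, true_and] at hu hw
    obtain ⟨i, rfl⟩ := hu
    obtain ⟨j, rfl⟩ := hw
    rw [cycleGraph_adj_iff_val hn] at hadj
    have hi := i.isLt
    have hj := j.isLt
    simp only [show ∀ k, (evens k).val = 2 * k.val from fun _ => rfl] at hadj
    omega
  simpa using hindep.card_le_indepNum

theorem not_isW2_cycleGraph_of_six_le {n : ℕ} (hn : 6 ≤ n) : ¬ IsW2 (cycleGraph n) := by
  intro hW
  let v (k : Fin 6) : Fin n := Fin.castLE hn k
  have adj_succ : ∀ k : Fin 5, (cycleGraph n).Adj (v k.succ) (v k.castSucc) := fun k =>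
    (cycleGraph_adj_iff_val (by omega)).2 (Or.inl rfl)
  have hB : IsIndep (cycleGraph n) {v 2, v 5} := by
    intro a ha b hb hadj
    simp only [Finset.mem_insert, Finset.mem_singleton] at ha hb
    rw [cycleGraph_adj_iff_val (by omega)] at hadj
    rcases ha with rfl | rfl <;> rcases hb with rfl | rfl <;> simp [v] at hadj <;> omega
  obtain ⟨A', B', hAA', hBB', hA', hB', hcard⟩ :=
    hW.exists_extensions_card_compl (IsIndep.singleton _ (v 0)) hB
      (by simp [v, Finset.disjoint_singleton_left, Fin.ext_iff])
  have h1 : v 1 ∈ (A' ∪ B')ᶜ := Finset.mem_compl.2 <|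
    hA'.notMem_union_of_adj hB' (hAA' (by simp)) (hBB' (by simp)) (adj_succ 0) (adj_succ 1).symm
  have h34 : ∃ w ∈ (A' ∪ B')ᶜ, w ≠ v 1 := by
    by_cases h3 : v 3 ∈ A'
    · refine ⟨v 4, Finset.mem_compl.2 <| hA'.notMem_union_of_adj hB' h3 (hBB' (by simp))
        (adj_succ 3) (adj_succ 4).symm, by simp [v, Fin.ext_iff]⟩
    · refine ⟨v 3, Finset.mem_compl.2 fun h => ?_, by simp [v, Fin.ext_iff]⟩
      rcases Finset.mem_union.1 h with h | h
      exacts [h3 h, hB' h (hBB' (by simp)) (adj_succ 2)]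
  obtain ⟨w, hw, hw1⟩ := h34
  have hlt : 1 < (A' ∪ B')ᶜ.card := Finset.one_lt_card.2 ⟨v 1, h1, w, hw, hw1.symm⟩
  have hα := div_two_le_indepNum_cycleGraph n
  rw [hcard, Fintype.card_fin] at hlt
  omega

theorem isW2_cycleGraph_three : IsW2 (cycleGraph 3) := by
  have hα : _root_.indepNum (cycleGraph 3) = 1 :=
    le_antisymm (indepNum_le (by decide)) (div_two_le_indepNum_cycleGraph 3)
  refine ⟨by simp, ?_⟩
  rw [hα]
  decide

theorem not_isW2_cycleGraph_four : ¬ IsW2 (cycleGraph 4) := by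
  have hα : _root_.indepNum (cycleGraph 4) = 2 :=
    le_antisymm (indepNum_le (by decide)) (div_two_le_indepNum_cycleGraph 4)
  rw [IsW2, hα]
  decide

theorem isW2_cycleGraph_five : IsW2 (cycleGraph 5) := by
  have hα : _root_.indepNum (cycleGraph 5) = 2 :=
    le_antisymm (indepNum_le (by decide)) (div_two_le_indepNum_cycleGraph 5)
  refine ⟨by simp, ?_⟩
  rw [hα]
  decide

theorem stmt_18 (n : ℕ) (hn : 3 ≤ n) :
    IsW2 (SimpleGraph.cycleGraph n) ↔ n = 3 ∨ n = 5 := by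
  rcases (by omega : n = 3 ∨ n = 4 ∨ n = 5 ∨ 6 ≤ n) with rfl | rfl | rfl | h6
  · simpa using isW2_cycleGraph_three
  · simpa using not_isW2_cycleGraph_four
  · simpa using isW2_cycleGraph_five
  · exact iff_of_false (not_isW2_cycleGraph_of_six_le h6) (by omega)
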